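/- Let X be a simplicial complex on n vertices with ground set V. If X is collapsible (collapses to a complex consisting of a single vertex), then its Alexander dual X* is anticollapsible, i.e. X* anticollapses to the simplex Δ_{n−1} of all subsets of V. -/

import Mathlib

/-- A simplicial complex: a collection of finite subsets of the vertex type,
closed under taking subsets. -/
def IsComplex {V : Type*} [DecidableEq V] (X : Set (Finset V)) : Prop :=
  ∀ σ ∈ X, ∀ τ : Finset V, τ ⊆ σ → τ ∈ X

/-- `τ` is a free face of `X`, with `σ` the unique face of `X` properly containing `τ`. -/
def IsFreeFace {V : Type*} [DecidableEq V] (X : Set (Finset V)) (τ σ : Finset V) : Prop :=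
  τ ∈ X ∧ τ.Nonempty ∧ σ ∈ X ∧ τ ⊂ σ ∧ ∀ ρ ∈ X, τ ⊂ ρ → ρ = σ

/-- `X` has a free face. -/
def HasFreeFace {V : Type*} [DecidableEq V] (X : Set (Finset V)) : Prop :=
  ∃ τ σ, IsFreeFace X τ σ

/-- An elementary collapse: remove a free face `τ` together with the unique face `σ`
properly containing it. -/
def CollapseStep {V : Type*} [DecidableEq V] (X Y : Set (Finset V)) : Prop :=
  ∃ τ σ, IsFreeFace X τ σ ∧ Y = X \ {τ, σ}

/-- `X` collapses to `Y` via a finite sequence of elementary collapses. -/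
def CollapsesTo {V : Type*} [DecidableEq V] (X Y : Set (Finset V)) : Prop :=
  Relation.ReflTransGen CollapseStep X Y

/-- `X` has dimension exactly `d`: some face has `d + 1` vertices, and
every face has at most `d + 1` vertices. -/
def Dim {V : Type*} [DecidableEq V] (X : Set (Finset V)) (d : ℕ) : Prop :=
  (∃ σ ∈ X, σ.card = d + 1) ∧ ∀ σ ∈ X, σ.card ≤ d + 1

/-- An elementary anticollapse: add a pair `τ ⊂ σ` with `|σ| = |τ| + 1`, where `τ ∉ X`
and every subset of `σ` of cardinality `|σ| - 1` other than `τ` is already a face of `X`. -/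
def AnticollapseStep {V : Type*} [DecidableEq V] (X Y : Set (Finset V)) : Prop :=
  ∃ τ σ : Finset V, τ ⊂ σ ∧ σ.card = τ.card + 1 ∧ τ ∉ X ∧
    (∀ ρ ⊆ σ, ρ.card + 1 = σ.card → ρ ≠ τ → ρ ∈ X) ∧
    Y = X ∪ {τ, σ}

/-- `X` anticollapses to `Y` via a finite sequence of elementary anticollapses. -/
def AnticollapsesTo {V : Type*} [DecidableEq V] (X Y : Set (Finset V)) : Prop :=
  Relation.ReflTransGen AnticollapseStep X Y

/-- The Alexander dual of a complex `X` on the (finite) ground set `V`: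
all subsets `σ` of `V` whose complement is not a face of `X`. -/
def AlexanderDual {V : Type*} [Fintype V] [DecidableEq V] (X : Set (Finset V)) :
    Set (Finset V) :=
  {σ : Finset V | σᶜ ∉ X}

/-!
Taking complements reverses inclusion, so an elementary collapse of `X` removing a free pair
`τ ⊂ σ` is, on the dual side, an elementary anticollapse adding `σᶜ ⊂ τᶜ`. Following the
collapse of `X` to a vertex `{v}` therefore anticollapses `X*` to the dual of `{∅, {v}}`, and
one more anticollapse, the dual of removing the pair `∅ ⊂ {v}`, reaches the dual of the empty
family, which is the full simplex.
-/

namespace IsComplex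

variable {V : Type*} [DecidableEq V] {X : Set (Finset V)} {τ σ : Finset V}

theorem card_eq_succ_of_unique_ssuperset (hX : IsComplex X) (hσ : σ ∈ X) (hτσ : τ ⊂ σ)
    (huniq : ∀ ρ ∈ X, τ ⊂ ρ → ρ = σ) : σ.card = τ.card + 1 := by
  obtain ⟨x, hxσ, hxτ⟩ := Finset.exists_of_ssubset hτσ
  have hinsert : insert x τ = σ :=
    huniq _ (hX σ hσ _ (Finset.insert_subset hxσ hτσ.subset)) (Finset.ssubset_insert hxτ)
  rw [← hinsert, Finset.card_insert_of_notMem hxτ]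

theorem of_collapseStep {Y : Set (Finset V)} (hX : IsComplex X) (hs : CollapseStep X Y) :
    IsComplex Y := by
  obtain ⟨τ, σ, ⟨-, -, -, hτσ, huniq⟩, rfl⟩ := hs
  rintro ρ ⟨hρX, hρ⟩ μ hμρ
  refine ⟨hX ρ hρX μ hμρ, ?_⟩
  rintro (rfl | rfl)
  · exact hρ (Or.inr (huniq ρ hρX (Finset.ssubset_iff_subset_ne.mpr
      ⟨hμρ, fun h => hρ (Or.inl h.symm)⟩)))
  · exact hρ (Or.inr (huniq ρ hρX (hτσ.trans_le hμρ)))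

end IsComplex

theorem CollapsesTo.isComplex {V : Type*} [DecidableEq V] {X Y : Set (Finset V)}
    (hX : IsComplex X) (h : CollapsesTo X Y) : IsComplex Y := by
  induction h with
  | refl => exact hX
  | tail _ hs ih => exact ih.of_collapseStep hs

section AlexanderDual

variable {V : Type*} [Fintype V] [DecidableEq V]

@[simp]
theorem alexanderDual_empty : AlexanderDual (∅ : Set (Finset V)) = Set.univ := by
  simp [AlexanderDual]

theorem alexanderDual_diff_pair (X : Set (Finset V)) (τ σ : Finset V) :
    AlexanderDual (X \ {τ, σ}) = AlexanderDual X ∪ {σᶜ, τᶜ} := by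
  ext ρ
  simp only [AlexanderDual, Set.mem_sdiff, Set.mem_union, Set.mem_insert_iff,
    Set.mem_singleton_iff, Set.mem_ofPred_eq, eq_compl_comm (x := ρ)]
  tauto

/-- Unlike a free face, `τ` may be empty here, so that this also covers the pair `∅ ⊂ {v}`. -/
theorem anticollapseStep_alexanderDual_diff {X : Set (Finset V)} {τ σ : Finset V}
    (hX : IsComplex X) (hσ : σ ∈ X) (hτσ : τ ⊂ σ) (huniq : ∀ ρ ∈ X, τ ⊂ ρ → ρ = σ) :
    AnticollapseStep (AlexanderDual X) (AlexanderDual (X \ {τ, σ})) := by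
  have hcard := hX.card_eq_succ_of_unique_ssuperset hσ hτσ huniq
  have hσV := Finset.card_le_univ σ
  refine ⟨σᶜ, τᶜ, Finset.compl_ssubset_compl.mpr hτσ, ?_, by simpa [AlexanderDual] using hσ,
    ?_, alexanderDual_diff_pair X τ σ⟩
  · rw [Finset.card_compl, Finset.card_compl]
    omega
  · intro ρ hρτ hρcard hρσ hρX
    have hτρ : τ ⊆ ρᶜ := Finset.subset_compl_comm.mp hρτ
    have hcardρ : ρᶜ.card = τ.card + 1 := by
      have := Finset.card_le_univ ρ
      rw [Finset.card_compl] at hρcard ⊢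
      omega
    have hρσ' : ρᶜ = σ :=
      huniq _ hρX (Finset.ssubset_iff_subset_ne.mpr ⟨hτρ, by rintro rfl; omega⟩)
    exact hρσ (by rw [← hρσ', compl_compl])

theorem CollapseStep.anticollapseStep_alexanderDual {X Y : Set (Finset V)}
    (hX : IsComplex X) (hs : CollapseStep X Y) :
    AnticollapseStep (AlexanderDual X) (AlexanderDual Y) := by
  obtain ⟨τ, σ, ⟨-, -, hσ, hτσ, huniq⟩, rfl⟩ := hs
  exact anticollapseStep_alexanderDual_diff hX hσ hτσ huniq

theorem CollapsesTo.anticollapsesTo_alexanderDual {X Y : Set (Finset V)}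
    (hX : IsComplex X) (h : CollapsesTo X Y) :
    AnticollapsesTo (AlexanderDual X) (AlexanderDual Y) := by
  induction h with
  | refl => exact .refl
  | tail hXZ hs ih =>
    exact ih.tail (CollapseStep.anticollapseStep_alexanderDual (CollapsesTo.isComplex hX hXZ) hs)

theorem anticollapseStep_alexanderDual_vertex (v : V) :
    AnticollapseStep (AlexanderDual {∅, {v}}) Set.univ := by
  have hcomplex : IsComplex ({∅, {v}} : Set (Finset V)) := by
    rintro σ (rfl | rfl) τ hτ
    · exact .inl (Finset.subset_empty.mp hτ)
    · exact (Finset.subset_singleton_iff.mp hτ).imp id id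
  have huniq : ∀ ρ ∈ ({∅, {v}} : Set (Finset V)), ∅ ⊂ ρ → ρ = {v} := by
    rintro ρ (rfl | rfl) hρ
    · exact absurd hρ (lt_irrefl _)
    · rfl
  simpa using anticollapseStep_alexanderDual_diff hcomplex (.inr rfl)
    (Finset.empty_ssubset.mpr (Finset.singleton_nonempty v)) huniq

end AlexanderDual

theorem stmt_8_general {V : Type*} [Fintype V] [DecidableEq V] (X : Set (Finset V)) (hX : IsComplex X)
    (h : ∃ v : V, CollapsesTo X {∅, ({v} : Finset V)}) :
    AnticollapsesTo (AlexanderDual X) (Set.univ : Set (Finset V)) := by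
  obtain ⟨v, hcollapse⟩ := h
  exact (hcollapse.anticollapsesTo_alexanderDual hX).tail (anticollapseStep_alexanderDual_vertex v)

/-- If a simplicial complex `X` on `n` vertices is collapsible (collapses to a single
vertex), then its Alexander dual anticollapses to the full simplex on the `n` vertices. -/
theorem stmt_8 {V : Type*} [Fintype V] [DecidableEq V] (n : ℕ)
    (hcard : Fintype.card V = n) (X : Set (Finset V)) (hX : IsComplex X)
    (hvert : ∀ v : V, ({v} : Finset V) ∈ X)
    (h : ∃ v : V, CollapsesTo X {∅, ({v} : Finset V)}) :
    AnticollapsesTo (AlexanderDual X) (Set.univ : Set (Finset V)) :=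
  stmt_8_general X hX h
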